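/- If a positive integer z lies on a Collatz cycle of length n with k odd terms, then 2^n ≥ 3^k; if a negative integer z lies on a Collatz cycle of length n with k odd terms, then 2^n < 3^k. -/
import Mathlib


/-- The Collatz map on the integers. -/
def collatzTZ (x : ℤ) : ℤ := if x % 2 = 0 then x / 2 else (3 * x + 1) / 2

lemma collatz_two_mul (y : ℤ) :
    2 * collatzTZ y = if y % 2 = 0 then y else 3 * y + 1 := by
  unfold collatzTZ
  split_ifs with h
  · omega
  · have h2 : (3 * y + 1) % 2 = 0 := by omega
    omega

lemma collatz_key (z : ℤ) (n : ℕ) :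
    ∃ c : ℤ, 0 ≤ c ∧ 2 ^ n * collatzTZ^[n] z =
      3 ^ (((Finset.range n).filter fun i => collatzTZ^[i] z % 2 ≠ 0).card) * z + c := by
  induction n with
  | zero => exact ⟨0, le_refl 0, by simp⟩
  | succ n ih =>
    obtain ⟨c, hc, heq⟩ := ih
    have hrange : (Finset.range (n+1)).filter (fun i => collatzTZ^[i] z % 2 ≠ 0) =
        if collatzTZ^[n] z % 2 ≠ 0 then
          insert n ((Finset.range n).filter fun i => collatzTZ^[i] z % 2 ≠ 0)
        else (Finset.range n).filter fun i => collatzTZ^[i] z % 2 ≠ 0 := by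
      rw [Finset.range_add_one, Finset.filter_insert]
    have hnm : n ∉ (Finset.range n).filter fun i => collatzTZ^[i] z % 2 ≠ 0 := by
      simp
    have hit : collatzTZ^[n+1] z = collatzTZ (collatzTZ^[n] z) :=
      Function.iterate_succ_apply' _ _ _
    by_cases h : collatzTZ^[n] z % 2 = 0
    · refine ⟨c, hc, ?_⟩
      rw [hrange, if_neg (by simpa using h)]
      have := collatz_two_mul (collatzTZ^[n] z)
      rw [if_pos h] at this
      rw [hit]
      calc 2 ^ (n+1) * collatzTZ (collatzTZ^[n] z)
          = 2 ^ n * (2 * collatzTZ (collatzTZ^[n] z)) := by ring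
        _ = 2 ^ n * collatzTZ^[n] z := by rw [this]
        _ = _ := heq
    · refine ⟨3 * c + 2 ^ n, by positivity, ?_⟩
      rw [hrange, if_pos h, Finset.card_insert_of_notMem hnm]
      have := collatz_two_mul (collatzTZ^[n] z)
      rw [if_neg h] at this
      rw [hit]
      calc 2 ^ (n+1) * collatzTZ (collatzTZ^[n] z)
          = 2 ^ n * (2 * collatzTZ (collatzTZ^[n] z)) := by ring
        _ = 2 ^ n * (3 * collatzTZ^[n] z + 1) := by rw [this]
        _ = 3 * (2 ^ n * collatzTZ^[n] z) + 2 ^ n := by ring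
        _ = _ := by rw [heq]; ring

theorem stmt_17 (z : ℤ) (n : ℕ) (hn : 1 ≤ n) (hcyc : collatzTZ^[n] z = z)
    (k : ℕ) (hk : k = ((Finset.range n).filter fun i => collatzTZ^[i] z % 2 ≠ 0).card) :
    (0 < z → (3 : ℕ) ^ k ≤ 2 ^ n) ∧ (z < 0 → (2 : ℕ) ^ n < 3 ^ k) := by
  obtain ⟨c, hc, heq⟩ := collatz_key z n
  rw [hcyc, ← hk] at heq
  have hmain : ((2:ℤ) ^ n - 3 ^ k) * z = c := by linarith
  have hne : (2:ℤ) ^ n ≠ 3 ^ k := by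
    intro h
    have h2 : (2:ℤ) ^ n % 2 = 0 := by
      have : (2:ℤ) ∣ 2 ^ n := dvd_pow_self 2 (by omega)
      omega
    have h3 : (3:ℤ) ^ k % 2 = 1 := by
      exact Int.odd_iff.mp (Odd.pow ⟨1, by ring⟩)
    omega
  constructor
  · intro hz
    have : (3:ℤ) ^ k ≤ 2 ^ n := by nlinarith
    exact_mod_cast this
  · intro hz
    have : (2:ℤ) ^ n ≤ 3 ^ k := by nlinarith
    have : (2:ℤ) ^ n < 3 ^ k := lt_of_le_of_ne this hne
    exact_mod_cast this
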